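/- arXiv:2506.17365 — 5 statements merged into one kernel-verified Lean document; each statement's English description precedes it below -/
import Mathlib

section
/- For all n×n complex matrices A and B, the Frobenius norm satisfies ‖AB − BA‖_F² ≤ 2‖A‖_F²‖B‖_F². -/
open Matrix Kronecker BigOperators

/-- Squared Frobenius norm of a complex matrix. -/
noncomputable def frobSq {m n : Type*} [Fintype m] [Fintype n] (A : Matrix m n ℂ) : ℝ :=
  ∑ i, ∑ j, ‖A i j‖ ^ 2

/-- Eigenvalues of a Hermitian matrix sorted in decreasing order (junk value `[]` otherwise). -/
noncomputable def eigsSorted {k : Type*} [Fintype k] [DecidableEq k] (H : Matrix k k ℂ) : List ℝ :=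
  if hH : H.IsHermitian then (Finset.univ.toList.map hH.eigenvalues).insertionSort (· ≥ ·) else []

/-- `eigNth H i` is the `i`-th largest eigenvalue (1-indexed) of the Hermitian matrix `H`,
with junk value `0` out of range. -/
noncomputable def eigNth {k : Type*} [Fintype k] [DecidableEq k] (H : Matrix k k ℂ) (i : ℕ) : ℝ :=
  (eigsSorted H).getD (i - 1) 0

/-- `sv A i` is the `i`-th largest singular value (1-indexed) of `A`,
taken to be `0` out of range. -/
noncomputable def sv {m n : Type*} [Fintype m] [Fintype n] [DecidableEq n]
    (A : Matrix m n ℂ) (i : ℕ) : ℝ :=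
  Real.sqrt (eigNth (Aᴴ * A) i)

/-- `vecCols Y` stacks the columns of `Y` into one column vector. -/
def vecCols {n m : Type*} (Y : Matrix n m ℂ) : m × n → ℂ := fun p => Y p.2 p.1

/-!
Write `B = U Σ V*` (singular value decomposition). By unitary invariance of the Frobenius norm,
`‖AB - BA‖² = ∑ₖₗ |σₗ Pₖₗ - σₖ Qₖₗ|²` with `P = U* A U` and `Q = V* A V = W* P W`, `W = U* V`,
both of Frobenius norm `‖A‖`. Each term is at most `(σₖ² + σₗ²)(|Pₖₗ|² + |Qₖₗ|²)`, and
`σₖ² + σₗ² ≤ ∑ σ²` except for `k = l = k₀`, the index of the largest singular value. That one term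
is paid for by the block `k, l ≠ k₀`, whose weights are at most `2 (∑ σ² - σₖ₀²)`, thanks to
`|Pₖ₀ₖ₀ - Qₖ₀ₖ₀|² ≤ 2 ∑_{k,l ≠ k₀} (|Pₖₗ|² + |Qₖₗ|²)`.
-/

open Matrix Finset ComplexConjugate

lemma norm_sub_sq_le {E : Type*} [SeminormedAddCommGroup E] (x y : E) :
    ‖x - y‖ ^ 2 ≤ 2 * (‖x‖ ^ 2 + ‖y‖ ^ 2) :=
  (pow_le_pow_left₀ (norm_nonneg _) (norm_sub_le x y) 2).trans add_sq_le

lemma norm_mul_sub_mul_sq_le {R : Type*} [SeminormedRing R] (a b z w : R) :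
    ‖a * z - b * w‖ ^ 2 ≤ (‖a‖ ^ 2 + ‖b‖ ^ 2) * (‖z‖ ^ 2 + ‖w‖ ^ 2) := by
  have h : ‖a * z - b * w‖ ≤ ‖a‖ * ‖z‖ + ‖b‖ * ‖w‖ :=
    (norm_sub_le _ _).trans (add_le_add (norm_mul_le _ _) (norm_mul_le _ _))
  calc ‖a * z - b * w‖ ^ 2 ≤ (‖a‖ * ‖z‖ + ‖b‖ * ‖w‖) ^ 2 :=
        pow_le_pow_left₀ (norm_nonneg _) h 2
    _ ≤ (‖a‖ ^ 2 + ‖b‖ ^ 2) * (‖z‖ ^ 2 + ‖w‖ ^ 2) := by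
        nlinarith [sq_nonneg (‖a‖ * ‖w‖ - ‖b‖ * ‖z‖)]

section Frobenius

variable {m n : Type*} [Fintype m] [Fintype n]

lemma frobSq_eq_re_trace (M : Matrix m n ℂ) : frobSq M = (Mᴴ * M).trace.re := by
  simp only [frobSq, trace, Matrix.diag, mul_apply, conjTranspose_apply, Complex.re_sum,
    RCLike.star_def, ← Complex.normSq_eq_conj_mul_self, Complex.ofReal_re, Complex.sq_norm]
  exact Finset.sum_comm

lemma frobSq_conjTranspose (M : Matrix m n ℂ) : frobSq Mᴴ = frobSq M := by
  simp only [frobSq, conjTranspose_apply, norm_star]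
  exact Finset.sum_comm

lemma frobSq_unitary_mul [DecidableEq m] {U : Matrix m m ℂ} (hU : U ∈ unitaryGroup m ℂ)
    (M : Matrix m n ℂ) : frobSq (U * M) = frobSq M := by
  rw [frobSq_eq_re_trace, frobSq_eq_re_trace, conjTranspose_mul, Matrix.mul_assoc,
    ← Matrix.mul_assoc Uᴴ, ← star_eq_conjTranspose, Unitary.star_mul_self_of_mem hU,
    Matrix.one_mul]

lemma frobSq_mul_unitary [DecidableEq n] {V : Matrix n n ℂ} (hV : V ∈ unitaryGroup n ℂ)
    (M : Matrix m n ℂ) : frobSq (M * V) = frobSq M := by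
  rw [← frobSq_conjTranspose, conjTranspose_mul, ← star_eq_conjTranspose V,
    frobSq_unitary_mul (Unitary.star_mem hV), frobSq_conjTranspose]

lemma frobSq_diagonal [DecidableEq n] (d : n → ℂ) : frobSq (diagonal d) = ∑ k, ‖d k‖ ^ 2 := by
  refine Finset.sum_congr rfl fun k _ => ?_
  rw [Finset.sum_eq_single k (fun l _ hl => by simp [diagonal_apply_ne' _ hl]) (by simp),
    diagonal_apply_eq]

end Frobenius

lemma exists_unitary_mul_diagonal_mul_star {n : ℕ} (B : Matrix (Fin n) (Fin n) ℂ) :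
    ∃ U ∈ unitaryGroup (Fin n) ℂ, ∃ V ∈ unitaryGroup (Fin n) ℂ, ∃ σ : Fin n → ℝ,
      B = U * diagonal (fun k => (σ k : ℂ)) * star V := by
  have hH := isHermitian_conjTranspose_mul_self B
  set v := hH.eigenvectorBasis
  set f : Fin n → EuclideanSpace ℂ (Fin n) := fun k => WithLp.toLp 2 (B *ᵥ v k)
  have hf : Pairwise fun k l => inner ℂ (f k) (f l) = 0 := by
    intro k l hkl
    have hv : inner ℂ (v k) (v l) = (0 : ℂ) := by
      simp [hkl, orthonormal_iff_ite.mp v.orthonormal k l]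
    rw [EuclideanSpace.inner_eq_star_dotProduct] at hv ⊢
    rw [dotProduct_comm, star_mulVec, ← dotProduct_mulVec, mulVec_mulVec,
      hH.mulVec_eigenvectorBasis, dotProduct_smul, dotProduct_comm, hv, smul_zero]
  set b := InnerProductSpace.gramSchmidtOrthonormalBasis (𝕜 := ℂ) (by simp) f
  have hfb : ∀ k, f k = (‖f k‖ : ℂ) • b k := by
    intro k
    by_cases hk : f k = 0
    · simp [hk]
    · rw [InnerProductSpace.gramSchmidtOrthonormalBasis_apply_of_orthogonal _ hf hk, smul_smul]
      simp [hk]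
  set V : Matrix (Fin n) (Fin n) ℂ := (hH.eigenvectorUnitary : Matrix (Fin n) (Fin n) ℂ)
  set U := (EuclideanSpace.basisFun (Fin n) ℂ).toBasis.toMatrix b
  refine ⟨U, OrthonormalBasis.toMatrix_orthonormalBasis_mem_unitary _ _, V,
    hH.eigenvectorUnitary.2, fun k => ‖f k‖, ?_⟩
  have hBV : B * V = U * diagonal (fun k => (‖f k‖ : ℂ)) := by
    ext i k
    rw [mul_diagonal]
    have := congrArg (fun x : EuclideanSpace ℂ (Fin n) => x i) (hfb k)
    simpa [f, U, V, Module.Basis.toMatrix_apply, mul_apply, mulVec, dotProduct, mul_comm]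
      using this
  rw [← hBV, Matrix.mul_assoc, Unitary.mul_star_self_of_mem hH.eigenvectorUnitary.2, Matrix.mul_one]

section QuadForm

variable {n : Type*} [Fintype n]

def quadForm (P : Matrix n n ℂ) (x : n → ℂ) : ℂ := star x ⬝ᵥ (P *ᵥ x)

lemma quadForm_single_one [DecidableEq n] (P : Matrix n n ℂ) (k : n) :
    quadForm P (Pi.single k 1) = P k k := by
  simp [quadForm]

lemma quadForm_conj (P W : Matrix n n ℂ) (x : n → ℂ) :
    quadForm (star W * P * W) x = quadForm P (W *ᵥ x) := by
  rw [quadForm, quadForm, ← mulVec_mulVec, ← mulVec_mulVec, dotProduct_mulVec, star_mulVec,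
    star_eq_conjTranspose]

lemma quadForm_smul (P : Matrix n n ℂ) (c : ℂ) (x : n → ℂ) :
    quadForm P (c • x) = (‖c‖ ^ 2 : ℝ) * quadForm P x := by
  simp only [quadForm, star_smul, mulVec_smul, smul_dotProduct, dotProduct_smul, smul_eq_mul,
    RCLike.star_def, ← mul_assoc, Complex.mul_conj']
  push_cast
  ring

lemma quadForm_sub_smul_sub_quadForm_sub_conj_smul (P : Matrix n n ℂ) (v e : n → ℂ) (α : ℂ) :
    quadForm P (v - α • e) - quadForm P (e - conj α • v)
      = (1 - (‖α‖ ^ 2 : ℝ)) * (quadForm P v - quadForm P e) := by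
  simp only [quadForm, star_sub, star_smul, mulVec_sub, mulVec_smul, sub_dotProduct,
    dotProduct_sub, smul_dotProduct, dotProduct_smul, smul_eq_mul, RCLike.star_def,
    Complex.conj_conj]
  have h : conj α * α = (‖α‖ ^ 2 : ℝ) := by push_cast; exact Complex.conj_mul' α
  linear_combination (star e ⬝ᵥ P *ᵥ e - star v ⬝ᵥ P *ᵥ v) * h

lemma norm_sq_quadForm_le (P : Matrix n n ℂ) (x : n → ℂ) (s : Finset n)
    (hx : ∀ k ∉ s, x k = 0) :
    ‖quadForm P x‖ ^ 2 ≤ (∑ k ∈ s, ∑ l ∈ s, ‖P k l‖ ^ 2) * (∑ k, ‖x k‖ ^ 2) ^ 2 := by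
  have hres {M : Type} [AddCommMonoid M] (f : n → M) (hf : ∀ k ∉ s, f k = 0) :
      ∑ k, f k = ∑ k ∈ s, f k :=
    (sum_subset (subset_univ s) fun k _ hk => hf k hk).symm
  have hquad : quadForm P x = ∑ p ∈ s ×ˢ s, (conj (x p.1) * x p.2) * P p.1 p.2 := by
    simp only [quadForm, dotProduct, mulVec, Pi.star_apply, RCLike.star_def]
    rw [hres (fun k => conj (x k) * ∑ l, P k l * x l) fun k hk => by simp [hx k hk],
      sum_product]
    refine sum_congr rfl fun k _ => ?_
    rw [hres (fun l => P k l * x l) fun l hl => by simp [hx l hl], mul_sum]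
    exact sum_congr rfl fun l _ => by ring
  have hnorm : ∑ k, ‖x k‖ ^ 2 = ∑ k ∈ s, ‖x k‖ ^ 2 :=
    hres (fun k => ‖x k‖ ^ 2) fun k hk => by simp [hx k hk]
  calc ‖quadForm P x‖ ^ 2
      ≤ (∑ p ∈ s ×ˢ s, (‖x p.1‖ * ‖x p.2‖) * ‖P p.1 p.2‖) ^ 2 := by
        rw [hquad]
        refine pow_le_pow_left₀ (norm_nonneg _) ((norm_sum_le _ _).trans_eq ?_) 2
        simp only [norm_mul, Complex.norm_conj]
    _ ≤ (∑ p ∈ s ×ˢ s, (‖x p.1‖ * ‖x p.2‖) ^ 2) * ∑ p ∈ s ×ˢ s, ‖P p.1 p.2‖ ^ 2 :=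
        sum_mul_sq_le_sq_mul_sq _ _ _
    _ = (∑ k ∈ s, ∑ l ∈ s, ‖x k‖ ^ 2 * ‖x l‖ ^ 2) * ∑ k ∈ s, ∑ l ∈ s, ‖P k l‖ ^ 2 := by
        simp only [sum_product, mul_pow]
    _ = (∑ k ∈ s, ∑ l ∈ s, ‖P k l‖ ^ 2) * (∑ k, ‖x k‖ ^ 2) ^ 2 := by
        rw [mul_comm, hnorm, sq, sum_mul_sum s s (fun k => ‖x k‖ ^ 2) (fun k => ‖x k‖ ^ 2)]

lemma star_dotProduct_self_eq (x : n → ℂ) : star x ⬝ᵥ x = ((∑ k, ‖x k‖ ^ 2 : ℝ) : ℂ) := by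
  simp [dotProduct, Complex.conj_mul']

lemma sum_norm_sq_unitary_mulVec [DecidableEq n] {W : Matrix n n ℂ} (hW : W ∈ unitaryGroup n ℂ)
    (x : n → ℂ) : ∑ k, ‖(W *ᵥ x) k‖ ^ 2 = ∑ k, ‖x k‖ ^ 2 := by
  have h : star (W *ᵥ x) ⬝ᵥ (W *ᵥ x) = star x ⬝ᵥ x := by
    rw [star_mulVec, ← dotProduct_mulVec, mulVec_mulVec, ← star_eq_conjTranspose,
      Unitary.star_mul_self_of_mem hW, one_mulVec]
  exact_mod_cast (star_dotProduct_self_eq _).symm.trans (h.trans (star_dotProduct_self_eq x))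

lemma sum_norm_sq_sub_smul_single [DecidableEq n] (x : n → ℂ) (k₀ : n) :
    ∑ k, ‖(x - x k₀ • Pi.single k₀ 1 : n → ℂ) k‖ ^ 2 = ∑ k, ‖x k‖ ^ 2 - ‖x k₀‖ ^ 2 := by
  rw [Fintype.sum_eq_add_sum_compl k₀, Fintype.sum_eq_add_sum_compl k₀ (fun k => ‖x k‖ ^ 2)]
  have hoff : ∀ k ∈ ({k₀}ᶜ : Finset n), ‖(x - x k₀ • Pi.single k₀ 1 : n → ℂ) k‖ ^ 2 = ‖x k‖ ^ 2 :=
    fun k hk => by simp [show k ≠ k₀ by simpa using hk]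
  rw [sum_congr rfl hoff]
  simp

lemma sum_norm_sq_unitary_mulVec_single [DecidableEq n] {W : Matrix n n ℂ}
    (hW : W ∈ unitaryGroup n ℂ) (k₀ : n) : ∑ k, ‖(W *ᵥ Pi.single k₀ 1) k‖ ^ 2 = 1 := by
  rw [sum_norm_sq_unitary_mulVec hW]
  simp [Pi.single_apply, apply_ite]

lemma conj_apply_self_eq_of_norm_eq_one [DecidableEq n] (P : Matrix n n ℂ) {W : Matrix n n ℂ}
    (hW : W ∈ unitaryGroup n ℂ) {k₀ : n} (h : ‖W k₀ k₀‖ = 1) :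
    (star W * P * W) k₀ k₀ = P k₀ k₀ := by
  set v := W *ᵥ Pi.single k₀ 1
  have hvk : v k₀ = W k₀ k₀ := by simp [v]
  have hv : v = W k₀ k₀ • Pi.single k₀ 1 := by
    have h0 : ∑ k, ‖(v - v k₀ • Pi.single k₀ 1 : n → ℂ) k‖ ^ 2 = 0 := by
      rw [sum_norm_sq_sub_smul_single, sum_norm_sq_unitary_mulVec_single hW, hvk, h]
      norm_num
    rw [← hvk, ← sub_eq_zero]
    funext k
    simpa using (sum_eq_zero_iff_of_nonneg fun k _ => by positivity).mp h0 k (mem_univ k)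
  rw [← quadForm_single_one (star W * P * W), quadForm_conj,
    show W *ᵥ Pi.single k₀ 1 = v from rfl, hv, quadForm_smul, quadForm_single_one, h]
  simp

/-- With `v = W eₖ₀` and `α = vₖ₀`, the vectors `v - α eₖ₀` and `W* eₖ₀ - ᾱ eₖ₀` vanish at `k₀`,
have squared norm `1 - |α|²`, and their forms for `P` and `W* P W` differ by
`(1 - |α|²) (Qₖ₀ₖ₀ - Pₖ₀ₖ₀)`; Cauchy–Schwarz on the block away from `k₀` finishes. -/
lemma sq_mul_norm_sq_sub_conj_apply_le [DecidableEq n] (P : Matrix n n ℂ) {W : Matrix n n ℂ}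
    (hW : W ∈ unitaryGroup n ℂ) (k₀ : n) :
    (1 - ‖W k₀ k₀‖ ^ 2) ^ 2 * ‖P k₀ k₀ - (star W * P * W) k₀ k₀‖ ^ 2 ≤
      (1 - ‖W k₀ k₀‖ ^ 2) ^ 2 *
        (2 * ∑ k ∈ {k₀}ᶜ, ∑ l ∈ {k₀}ᶜ, (‖P k l‖ ^ 2 + ‖(star W * P * W) k l‖ ^ 2)) := by
  set Q := star W * P * W
  set e : n → ℂ := Pi.single k₀ 1
  set v := W *ᵥ e
  set y := star W *ᵥ e
  set α := W k₀ k₀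
  set a := 1 - ‖α‖ ^ 2
  have hvk : v k₀ = α := by simp [v, e, α]
  have hyk : y k₀ = conj α := by simp [y, e, α, star_apply]
  have hsupp (x : n → ℂ) : ∀ k ∉ ({k₀}ᶜ : Finset n), (x - x k₀ • e) k = 0 := by simp [e]
  have hX := norm_sq_quadForm_le P (v - α • e) {k₀}ᶜ (hvk ▸ hsupp v)
  have hY := norm_sq_quadForm_le Q (y - conj α • e) {k₀}ᶜ (hyk ▸ hsupp y)
  rw [← hvk, sum_norm_sq_sub_smul_single, sum_norm_sq_unitary_mulVec_single hW, hvk] at hX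
  rw [← hyk, sum_norm_sq_sub_smul_single, sum_norm_sq_unitary_mulVec_single (Unitary.star_mem hW),
    hyk, Complex.norm_conj] at hY
  have hWz : W *ᵥ (y - conj α • e) = e - conj α • v := by
    rw [mulVec_sub, mulVec_smul, mulVec_mulVec, Unitary.mul_star_self_of_mem hW, one_mulVec]
  have hid : quadForm P (v - α • e) - quadForm Q (y - conj α • e) = a * (Q k₀ k₀ - P k₀ k₀) := by
    rw [quadForm_conj, hWz, quadForm_sub_smul_sub_quadForm_sub_conj_smul,
      ← quadForm_single_one Q, quadForm_conj, quadForm_single_one]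
    push_cast [a]
    ring
  calc a ^ 2 * ‖P k₀ k₀ - Q k₀ k₀‖ ^ 2
      = ‖quadForm P (v - α • e) - quadForm Q (y - conj α • e)‖ ^ 2 := by
        rw [hid, norm_mul, norm_sub_rev, mul_pow, Complex.norm_real, Real.norm_eq_abs, sq_abs]
    _ ≤ 2 * (‖quadForm P (v - α • e)‖ ^ 2 + ‖quadForm Q (y - conj α • e)‖ ^ 2) :=
        norm_sub_sq_le _ _
    _ ≤ a ^ 2 * (2 * ∑ k ∈ {k₀}ᶜ, ∑ l ∈ {k₀}ᶜ, (‖P k l‖ ^ 2 + ‖Q k l‖ ^ 2)) := by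
        simp only [sum_add_distrib]
        linarith

lemma norm_sq_sub_conj_apply_le [DecidableEq n] (P : Matrix n n ℂ) {W : Matrix n n ℂ}
    (hW : W ∈ unitaryGroup n ℂ) (k₀ : n) :
    ‖P k₀ k₀ - (star W * P * W) k₀ k₀‖ ^ 2 ≤
      2 * ∑ k ∈ {k₀}ᶜ, ∑ l ∈ {k₀}ᶜ, (‖P k l‖ ^ 2 + ‖(star W * P * W) k l‖ ^ 2) := by
  by_cases h : ‖W k₀ k₀‖ = 1
  · rw [conj_apply_self_eq_of_norm_eq_one P hW h, sub_self, norm_zero, zero_pow two_ne_zero]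
    positivity
  · have ha : 0 < (1 - ‖W k₀ k₀‖ ^ 2) ^ 2 := pow_two_pos_of_ne_zero <| sub_ne_zero.mpr fun h1 =>
      h ((pow_eq_one_iff_of_nonneg (norm_nonneg _) two_ne_zero).mp h1.symm)
    exact le_of_mul_le_mul_left (sq_mul_norm_sq_sub_conj_apply_le P hW k₀) ha

end QuadForm

lemma sum_sum_eq_add_sum_compl {n M : Type*} [Fintype n] [DecidableEq n] [AddCommMonoid M]
    (G : n → n → M) (k₀ : n) :
    ∑ k, ∑ l, G k l = G k₀ k₀ + ∑ l ∈ {k₀}ᶜ, G k₀ l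
      + ∑ k ∈ {k₀}ᶜ, (G k k₀ + ∑ l ∈ {k₀}ᶜ, G k l) := by
  simp only [Fintype.sum_eq_add_sum_compl k₀]

lemma sum_sum_le_of_weighted_le {n : Type*} [Fintype n] [DecidableEq n] (F t : n → n → ℝ)
    (σ : n → ℝ) (k₀ : n) (hmax : ∀ k, σ k ^ 2 ≤ σ k₀ ^ 2) (ht : ∀ k l, 0 ≤ t k l)
    (hF : ∀ k l, F k l ≤ (σ k ^ 2 + σ l ^ 2) * t k l)
    (hF₀ : F k₀ k₀ ≤ 2 * σ k₀ ^ 2 * min (t k₀ k₀) (∑ k ∈ {k₀}ᶜ, ∑ l ∈ {k₀}ᶜ, t k l)) :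
    ∑ k, ∑ l, F k l ≤ (∑ k, σ k ^ 2) * ∑ k, ∑ l, t k l := by
  set m := σ k₀ ^ 2
  set R := ∑ k ∈ {k₀}ᶜ, σ k ^ 2
  set T := ∑ k ∈ {k₀}ᶜ, ∑ l ∈ {k₀}ᶜ, t k l
  have hS : ∑ k, σ k ^ 2 = m + R := Fintype.sum_eq_add_sum_compl k₀ _
  have hR : ∀ k ∈ ({k₀}ᶜ : Finset n), σ k ^ 2 ≤ R := fun k hk =>
    single_le_sum (f := fun k => σ k ^ 2) (fun _ _ => sq_nonneg _) hk
  have hT : 0 ≤ T := sum_nonneg fun k _ => sum_nonneg fun l _ => ht k l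
  have hm : 0 ≤ m := sq_nonneg _
  have hR₀ : 0 ≤ R := sum_nonneg fun _ _ => sq_nonneg _
  have hcross (k l : n) (hl : l ∈ ({k₀}ᶜ : Finset n)) : F k l ≤ (m + R) * t k l :=
    (hF k l).trans (mul_le_mul_of_nonneg_right (add_le_add (hmax k) (hR l hl)) (ht k l))
  have hcross' (k l : n) (hk : k ∈ ({k₀}ᶜ : Finset n)) : F k l ≤ (m + R) * t k l :=
    (hF k l).trans (mul_le_mul_of_nonneg_right (by linarith [hR k hk, hmax l]) (ht k l))
  have hblock (c : ℝ) (hc : ∀ k ∈ ({k₀}ᶜ : Finset n), ∀ l ∈ ({k₀}ᶜ : Finset n),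
      σ k ^ 2 + σ l ^ 2 ≤ c) : ∑ k ∈ {k₀}ᶜ, ∑ l ∈ {k₀}ᶜ, F k l ≤ c * T := by
    simp only [T, mul_sum]
    exact sum_le_sum fun k hk => sum_le_sum fun l hl =>
      (hF k l).trans (mul_le_mul_of_nonneg_right (hc k hk l hl) (ht k l))
  have hdiag : F k₀ k₀ + ∑ k ∈ {k₀}ᶜ, ∑ l ∈ {k₀}ᶜ, F k l ≤ (m + R) * t k₀ k₀ + (m + R) * T := by
    have hmin₁ := min_le_left (t k₀ k₀) T
    have hmin₂ := min_le_right (t k₀ k₀) T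
    rcases le_total m R with h | h
    · have := hblock (m + R) fun k _ l hl => by linarith [hmax k, hR l hl]
      nlinarith [mul_le_mul_of_nonneg_left hmin₁ (by positivity : 0 ≤ 2 * m),
        mul_le_mul_of_nonneg_right (by linarith : 2 * m ≤ m + R) (ht k₀ k₀)]
    · have := hblock (2 * R) fun k hk l hl => by linarith [hR k hk, hR l hl]
      nlinarith [mul_le_mul_of_nonneg_left hmin₁ (by linarith : 0 ≤ m + R),
        mul_le_mul_of_nonneg_left hmin₂ (by linarith : 0 ≤ m - R)]
  rw [sum_sum_eq_add_sum_compl F k₀, sum_sum_eq_add_sum_compl t k₀, hS]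
  have h1 : ∑ l ∈ {k₀}ᶜ, F k₀ l ≤ (m + R) * ∑ l ∈ {k₀}ᶜ, t k₀ l := by
    rw [mul_sum]; exact sum_le_sum fun l hl => hcross k₀ l hl
  have h2 : ∑ k ∈ {k₀}ᶜ, F k k₀ ≤ (m + R) * ∑ k ∈ {k₀}ᶜ, t k k₀ := by
    rw [mul_sum]; exact sum_le_sum fun k hk => hcross' k k₀ hk
  simp only [sum_add_distrib, mul_add] at *
  linarith

lemma frobSq_mul_diagonal_sub_diagonal_mul_conj_le {n : Type*} [Fintype n] [DecidableEq n]
    (P : Matrix n n ℂ) {W : Matrix n n ℂ} (hW : W ∈ unitaryGroup n ℂ) (σ : n → ℝ) :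
    frobSq (P * diagonal (fun k => (σ k : ℂ)) - diagonal (fun k => (σ k : ℂ)) * (star W * P * W))
      ≤ (∑ k, σ k ^ 2) * (frobSq P + frobSq (star W * P * W)) := by
  rcases isEmpty_or_nonempty n with hn | hn
  · simp [frobSq]
  obtain ⟨k₀, -, hk₀⟩ := exists_max_image univ (fun k => σ k ^ 2) univ_nonempty
  set Q := star W * P * W
  have hentry (k l : n) :
      (P * diagonal (fun k => (σ k : ℂ)) - diagonal (fun k => (σ k : ℂ)) * Q) k l
        = σ l * P k l - σ k * Q k l := by
    simp [mul_diagonal, diagonal_mul, mul_comm]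
  have hnorm (k : n) : ‖(σ k : ℂ)‖ ^ 2 = σ k ^ 2 := by
    rw [Complex.norm_real, Real.norm_eq_abs, sq_abs]
  have hd : ‖P k₀ k₀ - Q k₀ k₀‖ ^ 2 ≤
      2 * min (‖P k₀ k₀‖ ^ 2 + ‖Q k₀ k₀‖ ^ 2)
        (∑ k ∈ {k₀}ᶜ, ∑ l ∈ {k₀}ᶜ, (‖P k l‖ ^ 2 + ‖Q k l‖ ^ 2)) := by
    rw [mul_min_of_nonneg _ _ zero_le_two]
    exact le_min (norm_sub_sq_le _ _) (norm_sq_sub_conj_apply_le P hW k₀)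
  have key := sum_sum_le_of_weighted_le (fun k l => ‖(σ l : ℂ) * P k l - σ k * Q k l‖ ^ 2)
    (fun k l => ‖P k l‖ ^ 2 + ‖Q k l‖ ^ 2) σ k₀ (fun k => hk₀ k (mem_univ k))
    (fun _ _ => by positivity)
    (fun k l => by
      simpa only [hnorm, add_comm (σ l ^ 2)] using
        norm_mul_sub_mul_sq_le (σ l : ℂ) (σ k) (P k l) (Q k l))
    (by
      have := mul_le_mul_of_nonneg_left hd (sq_nonneg (σ k₀))
      rw [← mul_sub, norm_mul, mul_pow, hnorm]
      linarith)
  simpa only [frobSq, hentry, sum_add_distrib] using key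

lemma frobSq_conj_mul_diagonal_sub_diagonal_mul_conj_le {n : Type*} [Fintype n] [DecidableEq n]
    (A : Matrix n n ℂ) {U V : Matrix n n ℂ} (hU : U ∈ unitaryGroup n ℂ)
    (hV : V ∈ unitaryGroup n ℂ) (σ : n → ℝ) :
    frobSq (star U * A * U * diagonal (fun k => (σ k : ℂ))
        - diagonal (fun k => (σ k : ℂ)) * (star V * A * V))
      ≤ 2 * frobSq A * ∑ k, σ k ^ 2 := by
  have hUU (X : Matrix n n ℂ) : U * (star U * X) = X := by
    rw [← Matrix.mul_assoc, Unitary.mul_star_self_of_mem hU, Matrix.one_mul]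
  have hconj : star (star U * V) * (star U * A * U) * (star U * V) = star V * A * V := by
    simp only [star_mul, star_star, Matrix.mul_assoc, hUU]
  have hA {W : Matrix n n ℂ} (hW : W ∈ unitaryGroup n ℂ) : frobSq (star W * A * W) = frobSq A := by
    rw [frobSq_mul_unitary hW, frobSq_unitary_mul (Unitary.star_mem hW)]
  have key := frobSq_mul_diagonal_sub_diagonal_mul_conj_le (star U * A * U)
    (mul_mem (Unitary.star_mem hU) hV) σ
  rw [hconj, hA hU, hA hV] at key
  linarith

/-- Böttcher–Wenzel inequality. -/
theorem bottcher_wenzel {n : ℕ} (A B : Matrix (Fin n) (Fin n) ℂ) :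
    frobSq (A * B - B * A) ≤ 2 * frobSq A * frobSq B := by
  obtain ⟨U, hU, V, hV, σ, rfl⟩ := exists_unitary_mul_diagonal_mul_star B
  set D := diagonal fun k => (σ k : ℂ)
  have hUU (X : Matrix (Fin n) (Fin n) ℂ) : star U * (U * X) = X := by
    rw [← Matrix.mul_assoc, Unitary.star_mul_self_of_mem hU, Matrix.one_mul]
  have hcomm : star U * (A * (U * D * star V) - U * D * star V * A) * V
      = star U * A * U * D - D * (star V * A * V) := by
    simp only [Matrix.mul_sub, Matrix.sub_mul, Matrix.mul_assoc, hUU,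
      Unitary.star_mul_self_of_mem hV, Matrix.mul_one]
  have hB : frobSq (U * D * star V) = ∑ k, σ k ^ 2 := by
    simp only [frobSq_mul_unitary (Unitary.star_mem hV), frobSq_unitary_mul hU, frobSq_diagonal,
      D, Complex.norm_real, Real.norm_eq_abs, sq_abs]
  calc frobSq (A * (U * D * star V) - U * D * star V * A)
      = frobSq (star U * A * U * D - D * (star V * A * V)) := by
        rw [← hcomm, frobSq_mul_unitary hV, frobSq_unitary_mul (Unitary.star_mem hU)]
    _ ≤ 2 * frobSq A * frobSq (U * D * star V) :=
        hB ▸ frobSq_conj_mul_diagonal_sub_diagonal_mul_conj_le A hU hV σ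
end

section
/- Let A, C be m×1 complex column vectors and B a 1×m complex row vector. Then ‖ABC − CBA‖_F² ≤ (‖B‖_F²/2)·‖A⊗C − C⊗A‖_F² = ‖B‖_F²(‖A‖_F²‖C‖_F² − |⟨A,C⟩|²). -/
open Matrix Kronecker BigOperators

/-! The map `b ↦ (b ⬝ᵥ c) a - (b ⬝ᵥ a) c` is multiplication by the antisymmetric matrix
`K = a cᵀ - c aᵀ`, and a direct computation gives `K Kᴴ K = G K` with `G` the Gram determinant
`‖a‖²‖c‖² - |⟨a, c⟩|²`. Hence both nonzero singular values of `K` equal `√G`, so the operator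
norm of `K` is `√G` while its squared Frobenius norm is `2G`, which is the inequality. -/

open scoped InnerProduct

open ContinuousLinearMap in
theorem ContinuousLinearMap.norm_apply_sq_le_of_comp_adjoint_comp_eq
    {𝕜 E F : Type*} [RCLike 𝕜] [NormedAddCommGroup E] [InnerProductSpace 𝕜 E] [CompleteSpace E]
    [NormedAddCommGroup F] [InnerProductSpace 𝕜 F] [CompleteSpace F]
    (T : E →L[𝕜] F) {g : ℝ} (hg : 0 ≤ g) (hT : T ∘L T† ∘L T = (g : 𝕜) • T) (x : E) :
    ‖T x‖ ^ 2 ≤ g * ‖x‖ ^ 2 := by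
  have hle : ‖T x‖ ^ 2 ≤ ‖(T† ∘L T) x‖ * ‖x‖ := by
    rw [apply_norm_sq_eq_inner_adjoint_left]
    exact re_inner_le_norm _ _
  have hTTT : T ((T†) (T x)) = (g : 𝕜) • T x := congrArg (· x) hT
  have heq : ‖(T† ∘L T) x‖ ^ 2 = g * ‖T x‖ ^ 2 := by
    rw [comp_apply, apply_norm_sq_eq_inner_adjoint_left, adjoint_adjoint, comp_apply, hTTT,
      inner_smul_left, RCLike.conj_ofReal, RCLike.re_ofReal_mul, inner_self_eq_norm_sq]
  rcases (sq_nonneg ‖T x‖).eq_or_lt with h0 | hpos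
  · rw [← h0]
    positivity
  · -- `‖T x‖⁴ ≤ ‖T† T x‖² ‖x‖² = g ‖T x‖² ‖x‖²`, then cancel `‖T x‖² > 0`
    nlinarith [norm_nonneg x, norm_nonneg ((T† ∘L T) x)]

theorem Matrix.sum_norm_mulVec_sq_le_of_mul_conjTranspose_mul_eq
    {𝕜 n : Type*} [RCLike 𝕜] [Fintype n] [DecidableEq n] {K : Matrix n n 𝕜} {g : ℝ}
    (hg : 0 ≤ g) (hK : K * Kᴴ * K = (g : 𝕜) • K) (x : n → 𝕜) :
    ∑ i, ‖(K *ᵥ x) i‖ ^ 2 ≤ g * ∑ i, ‖x i‖ ^ 2 := by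
  set T := toEuclideanCLM (n := n) (𝕜 := 𝕜) K
  have hT : T ∘L T† ∘L T = (g : 𝕜) • T := by
    have h := congrArg (toEuclideanCLM (n := n) (𝕜 := 𝕜)) hK
    rwa [map_mul, map_mul, map_smul, ← star_eq_conjTranspose, map_star] at h
  simpa [EuclideanSpace.norm_sq_eq, T, toEuclideanCLM_toLp] using
    T.norm_apply_sq_le_of_comp_adjoint_comp_eq hg hT (WithLp.toLp 2 x)

theorem Matrix.ofReal_sum_sum_norm_sq {𝕜 m n : Type*} [RCLike 𝕜] [Fintype m] [Fintype n]
    (K : Matrix m n 𝕜) : ((∑ i, ∑ j, ‖K i j‖ ^ 2 : ℝ) : 𝕜) = trace (K * Kᴴ) := by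
  simp [trace, mul_apply, RCLike.mul_conj]

section Wedge

variable {R n : Type*} [CommRing R] [Fintype n]

def wedgeMatrix (a c : n → R) : Matrix n n R := vecMulVec a c - vecMulVec c a

theorem wedgeMatrix_mulVec (a c b : n → R) :
    wedgeMatrix a c *ᵥ b = (c ⬝ᵥ b) • a - (a ⬝ᵥ b) • c := by
  ext i
  simp only [wedgeMatrix, sub_mulVec, vecMulVec_mulVec, Pi.sub_apply, Pi.smul_apply, op_smul_eq_mul,
    smul_eq_mul]
  ring

variable [StarRing R]

theorem wedgeMatrix_mul_conjTranspose_mul_self (a c : n → R) :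
    wedgeMatrix a c * (wedgeMatrix a c)ᴴ * wedgeMatrix a c =
      ((a ⬝ᵥ star a) * (c ⬝ᵥ star c) - (a ⬝ᵥ star c) * (c ⬝ᵥ star a)) • wedgeMatrix a c := by
  simp only [wedgeMatrix, conjTranspose_sub, conjTranspose_vecMulVec, sub_mul, mul_sub,
    vecMulVec_mul_vecMulVec, vecMulVec_smul, smul_mul, dotProduct_comm (star a) a,
    dotProduct_comm (star a) c, dotProduct_comm (star c) a, dotProduct_comm (star c) c]
  module

theorem trace_wedgeMatrix_mul_conjTranspose (a c : n → R) :
    trace (wedgeMatrix a c * (wedgeMatrix a c)ᴴ) =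
      2 * ((a ⬝ᵥ star a) * (c ⬝ᵥ star c) - (a ⬝ᵥ star c) * (c ⬝ᵥ star a)) := by
  simp only [wedgeMatrix, conjTranspose_sub, conjTranspose_vecMulVec, sub_mul, mul_sub,
    vecMulVec_mul_vecMulVec, trace_sub, trace_vecMulVec, dotProduct_smul, smul_eq_mul]
  ring

end Wedge

section Gram

variable {𝕜 n : Type*} [RCLike 𝕜] [Fintype n]

def gramDet (a c : n → 𝕜) : ℝ := (∑ i, ‖a i‖ ^ 2) * (∑ i, ‖c i‖ ^ 2) - ‖a ⬝ᵥ star c‖ ^ 2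

theorem ofReal_gramDet (a c : n → 𝕜) :
    (gramDet a c : 𝕜) = (a ⬝ᵥ star a) * (c ⬝ᵥ star c) - (a ⬝ᵥ star c) * (c ⬝ᵥ star a) := by
  have hself (v : n → 𝕜) : v ⬝ᵥ star v = ((∑ i, ‖v i‖ ^ 2 : ℝ) : 𝕜) := by
    simp [dotProduct, RCLike.mul_conj]
  rw [gramDet, RCLike.ofReal_sub, RCLike.ofReal_mul, RCLike.ofReal_pow, ← hself, ← hself,
    ← RCLike.mul_conj, ← RCLike.star_def, ← dotProduct_star]

theorem sum_sum_norm_wedgeMatrix_sq (a c : n → 𝕜) :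
    ∑ i, ∑ j, ‖wedgeMatrix a c i j‖ ^ 2 = 2 * gramDet a c := by
  apply RCLike.ofReal_injective (K := 𝕜)
  rw [ofReal_sum_sum_norm_sq, trace_wedgeMatrix_mul_conjTranspose]
  push_cast
  rw [← ofReal_gramDet]

theorem gramDet_nonneg (a c : n → 𝕜) : 0 ≤ gramDet a c := by
  have hsum := sum_sum_norm_wedgeMatrix_sq a c
  have hnonneg : 0 ≤ ∑ i, ∑ j, ‖wedgeMatrix a c i j‖ ^ 2 := by positivity
  linarith

theorem sum_norm_wedgeMatrix_mulVec_sq_le [DecidableEq n] (a c b : n → 𝕜) :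
    ∑ i, ‖(wedgeMatrix a c *ᵥ b) i‖ ^ 2 ≤ gramDet a c * ∑ i, ‖b i‖ ^ 2 :=
  sum_norm_mulVec_sq_le_of_mul_conjTranspose_mul_eq (gramDet_nonneg a c)
    (by rw [ofReal_gramDet]; exact wedgeMatrix_mul_conjTranspose_mul_self a c) b

end Gram

theorem gbw_vector_kron {m : ℕ} (A C : Matrix (Fin m) (Fin 1) ℂ) (B : Matrix (Fin 1) (Fin m) ℂ) :
    frobSq (A * B * C - C * B * A) ≤ frobSq B / 2 * frobSq (A ⊗ₖ C - C ⊗ₖ A) ∧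
    frobSq B / 2 * frobSq (A ⊗ₖ C - C ⊗ₖ A)
      = frobSq B * (frobSq A * frobSq C - ‖Matrix.trace (A * Cᴴ)‖ ^ 2) := by
  set a : Fin m → ℂ := fun i => A i 0
  set c : Fin m → ℂ := fun i => C i 0
  set b : Fin m → ℂ := fun j => B 0 j
  have hB : frobSq B = ∑ j, ‖b j‖ ^ 2 := by simp [frobSq, b]
  have hprod : frobSq (A * B * C - C * B * A) = ∑ i, ‖(wedgeMatrix a c *ᵥ b) i‖ ^ 2 := by
    simp only [frobSq, wedgeMatrix_mulVec, Fin.sum_univ_one]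
    congr! 3 with i
    simp only [Matrix.sub_apply, mul_apply, Fin.sum_univ_one, Pi.sub_apply, Pi.smul_apply,
      smul_eq_mul, dotProduct, Finset.sum_mul, a, b, c]
    congr 1 <;> exact Finset.sum_congr rfl fun _ _ => by ring
  have hkron : frobSq (A ⊗ₖ C - C ⊗ₖ A) = 2 * gramDet a c := by
    rw [← sum_sum_norm_wedgeMatrix_sq]
    simp [frobSq, Fintype.sum_prod_type, wedgeMatrix, vecMulVec_apply, a, c]
  have hgram : frobSq A * frobSq C - ‖trace (A * Cᴴ)‖ ^ 2 = gramDet a c := by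
    simp [frobSq, gramDet, trace, mul_apply, dotProduct, a, c]
  refine ⟨?_, by rw [hkron, hgram]; ring⟩
  calc frobSq (A * B * C - C * B * A) ≤ gramDet a c * frobSq B := by
        rw [hprod, hB]; exact sum_norm_wedgeMatrix_mulVec_sq_le a c b
    _ = frobSq B / 2 * frobSq (A ⊗ₖ C - C ⊗ₖ A) := by rw [hkron]; ring
end

section
/- Let A, C be m×n complex matrices and define K = Cᵀ⊗A − Aᵀ⊗C (an mn×mn matrix). Then every positive eigenvalue of K*K has geometric multiplicity at least 2. -/
open Matrix Kronecker BigOperators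

/-! Reindexing the rows of `K` by `(c, d) ↦ (d, c)` gives a square matrix `N` with `NᴴN = KᴴK`
which is skew-symmetric, `Nᵀ = -N`. For skew-symmetric `N` one has
`N conj(x) = -conj(Nᴴ x)`, so if `NᴴN v = μ v` with `μ` real and nonzero, then `w = conj(N v)`
is again a nonzero eigenvector; it is orthogonal to `v` because `vᵀ N v = 0`. -/

namespace Matrix

variable {ι : Type*}

theorem conjTranspose_transpose_eq_neg {R : Type*} [CommRing R] [StarRing R]
    {N : Matrix ι ι R} (hN : Nᵀ = -N) : Nᴴᵀ = -Nᴴ := by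
  rw [← conjTranspose_transpose_eq_transpose_conjTranspose, hN, conjTranspose_neg]

variable [Fintype ι]

theorem mulVec_star_of_transpose_eq_neg {R : Type*} [CommRing R] [StarRing R]
    {N : Matrix ι ι R} (hN : Nᵀ = -N) (x : ι → R) :
    N *ᵥ star x = -star (Nᴴ *ᵥ x) := by
  rw [star_mulVec, conjTranspose_conjTranspose, ← mulVec_transpose, hN, neg_mulVec, neg_neg]

theorem dotProduct_mulVec_self_of_transpose_eq_neg {R : Type*} [CommRing R] [NoZeroDivisors R]
    [CharZero R] {N : Matrix ι ι R} (hN : Nᵀ = -N) (v : ι → R) : v ⬝ᵥ N *ᵥ v = 0 := by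
  rw [← CharZero.eq_neg_self_iff]
  calc v ⬝ᵥ N *ᵥ v = Nᵀ *ᵥ v ⬝ᵥ v := by rw [dotProduct_mulVec, mulVec_transpose]
    _ = -(v ⬝ᵥ N *ᵥ v) := by rw [hN, neg_mulVec, neg_dotProduct, dotProduct_comm]

theorem linearIndependent_pair_of_star_dotProduct_eq_zero {K : Type*} [Field K] [PartialOrder K]
    [StarRing K] [StarOrderedRing K] {v w : ι → K} (hv : v ≠ 0) (hw : w ≠ 0)
    (hvw : star v ⬝ᵥ w = 0) : LinearIndependent K ![v, w] := by
  rw [LinearIndependent.pair_iff' hv]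
  rintro a rfl
  rw [dotProduct_smul, smul_eq_mul, mul_eq_zero, dotProduct_star_self_eq_zero] at hvw
  obtain rfl | h := hvw
  · exact hw (zero_smul K v)
  · exact hv h

open scoped ComplexOrder in
theorem two_le_finrank_eigenspace_conjTranspose_mul_self_of_transpose_eq_neg [DecidableEq ι]
    {N : Matrix ι ι ℂ} (hN : Nᵀ = -N) {μ : ℝ} (hμ : μ ≠ 0)
    (hE : Module.End.HasEigenvalue (toLin' (Nᴴ * N)) (μ : ℂ)) :
    2 ≤ Module.finrank ℂ (Module.End.eigenspace (toLin' (Nᴴ * N)) (μ : ℂ)) := by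
  obtain ⟨v, hv⟩ := hE.exists_hasEigenvector
  have hNv : Nᴴ *ᵥ (N *ᵥ v) = (μ : ℂ) • v := by
    rw [mulVec_mulVec, ← toLin'_apply, hv.apply_eq_smul]
  set w := star (N *ᵥ v)
  have hNw : N *ᵥ w = -((μ : ℂ) • star v) := by
    rw [mulVec_star_of_transpose_eq_neg hN, hNv, star_smul, Complex.star_def, Complex.conj_ofReal]
  have hw : w ∈ Module.End.eigenspace (toLin' (Nᴴ * N)) (μ : ℂ) := by
    rw [Module.End.mem_eigenspace_iff, toLin'_apply, ← mulVec_mulVec, hNw, mulVec_neg,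
      mulVec_smul, mulVec_star_of_transpose_eq_neg (conjTranspose_transpose_eq_neg hN),
      conjTranspose_conjTranspose, smul_neg, neg_neg]
  have hw0 : w ≠ 0 := by
    intro h
    have : (μ : ℂ) • v = 0 := by rw [← hNv, star_eq_zero.mp h, mulVec_zero]
    exact hv.2 ((smul_eq_zero.mp this).resolve_left (by exact_mod_cast hμ))
  have hvw : star v ⬝ᵥ w = 0 := by
    rw [star_dotProduct_star, dotProduct_comm, dotProduct_mulVec_self_of_transpose_eq_neg hN,
      star_zero]
  have hspan : Submodule.span ℂ (Set.range ![v, w]) ≤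
      Module.End.eigenspace (toLin' (Nᴴ * N)) (μ : ℂ) := by
    rw [Submodule.span_le, Set.range_subset_iff, Fin.forall_fin_two]
    exact ⟨hv.1, hw⟩
  calc 2 = Module.finrank ℂ (Submodule.span ℂ (Set.range ![v, w])) := by
        rw [finrank_span_eq_card (linearIndependent_pair_of_star_dotProduct_eq_zero hv.2 hw0 hvw),
          Fintype.card_fin]
    _ ≤ _ := Submodule.finrank_mono hspan

theorem conjTranspose_submatrix_mul_submatrix_equiv {κ ι' R : Type*} [Fintype κ] [Fintype ι']
    [Semiring R] [StarRing R] (K : Matrix ι κ R) (e : ι' ≃ ι) :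
    (K.submatrix e id)ᴴ * K.submatrix e id = Kᴴ * K := by
  rw [conjTranspose_submatrix, submatrix_mul_equiv, submatrix_id_id]

theorem transpose_submatrix_prodComm_kronecker_sub_kronecker {m n R : Type*} [CommRing R]
    (A C : Matrix m n R) :
    ((Cᵀ ⊗ₖ A - Aᵀ ⊗ₖ C).submatrix (Equiv.prodComm m n) id)ᵀ =
      -(Cᵀ ⊗ₖ A - Aᵀ ⊗ₖ C).submatrix (Equiv.prodComm m n) id := by
  ext ⟨a, b⟩ ⟨c, d⟩
  simp only [transpose_apply, submatrix_apply, neg_apply, sub_apply, kroneckerMap_apply,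
    Equiv.prodComm_apply, Prod.swap, id]
  ring

end Matrix

theorem K_eigen_mult_two {m n : ℕ} (A C : Matrix (Fin m) (Fin n) ℂ)
    (K : Matrix (Fin n × Fin m) (Fin m × Fin n) ℂ) (hK : K = Cᵀ ⊗ₖ A - Aᵀ ⊗ₖ C)
    (μ : ℝ) (hμ : 0 < μ)
    (hE : Module.End.HasEigenvalue (Matrix.toLin' (Kᴴ * K)) (μ : ℂ)) :
    2 ≤ Module.finrank ℂ (Module.End.eigenspace (Matrix.toLin' (Kᴴ * K)) (μ : ℂ)) := by
  subst hK
  rw [← conjTranspose_submatrix_mul_submatrix_equiv _ (Equiv.prodComm (Fin m) (Fin n))] at hE ⊢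
  exact two_le_finrank_eigenspace_conjTranspose_mul_self_of_transpose_eq_neg
    (transpose_submatrix_prodComm_kronecker_sub_kronecker A C) hμ.ne' hE
end

section
/- For k×k Hermitian matrices X, Y and indices 1 ≤ i ≤ j ≤ k, the Weyl inequality λ_j(X+Y) ≤ λ_i(X) + λ_{j−i+1}(Y) holds, where λ_l denotes the l-th largest eigenvalue. -/
open Matrix Kronecker BigOperators

/-! Courant–Fischer dimension count. For an operator with decreasingly ordered eigenvalues
`λ₀ ≥ λ₁ ≥ ⋯` and orthonormal eigenvectors `eₘ`, the Rayleigh quotient `re ⟪v, T v⟫ / ‖v‖²` is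
at most `λᵢ` on the span of the `eₘ` with `m ≥ i`, and at least `λᵢ` on the span of those with
`m ≤ i`. For `S`, `T` and `S + T` take the spans of dimension `n - i`, `n - j` and `i + j + 1`:
their dimensions add up to more than `2 n`, so they share a nonzero vector `v`, and
`λ_{i+j}(S + T) ‖v‖² ≤ re ⟪v, (S + T) v⟫ = re ⟪v, S v⟫ + re ⟪v, T v⟫ ≤ (λᵢ(S) + λⱼ(T)) ‖v‖²`. -/

open Module

namespace Submodule

variable {K V : Type*} [DivisionRing K] [AddCommGroup V] [Module K V] [FiniteDimensional K V]

theorem finrank_add_finrank_le_finrank_add_finrank_inf (s t : Submodule K V) :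
    finrank K s + finrank K t ≤ finrank K V + finrank K ↥(s ⊓ t) := by
  rw [← s.finrank_sup_add_finrank_inf_eq t]
  exact Nat.add_le_add_right (s ⊔ t).finrank_le _

theorem inf_inf_ne_bot_of_two_mul_finrank_lt {s t u : Submodule K V}
    (h : 2 * finrank K V < finrank K s + finrank K t + finrank K u) : s ⊓ t ⊓ u ≠ ⊥ := by
  have hst := s.finrank_add_finrank_le_finrank_add_finrank_inf t
  have hstu := (s ⊓ t).finrank_add_finrank_le_finrank_add_finrank_inf u
  rw [Ne, ← Submodule.finrank_eq_zero]
  omega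

end Submodule

open Submodule
open scoped InnerProductSpace

namespace OrthonormalBasis

variable {ι 𝕜 E : Type*} [Fintype ι] [RCLike 𝕜] [NormedAddCommGroup E] [InnerProductSpace 𝕜 E]

theorem repr_eq_zero_of_mem_span_image (b : OrthonormalBasis ι 𝕜 E) {s : Set ι} {v : E}
    (hv : v ∈ span 𝕜 (b '' s)) {i : ι} (hi : i ∉ s) : b.repr v i = 0 := by
  rw [← b.coe_toBasis, b.toBasis.mem_span_image] at hv
  rw [← b.coe_toBasis_repr_apply]
  by_contra h
  exact hi (hv (Finsupp.mem_support_iff.2 h))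

theorem finrank_span_image (b : OrthonormalBasis ι 𝕜 E) (s : Finset ι) :
    finrank 𝕜 (span 𝕜 (b '' s)) = s.card := by
  have hli : LinearIndependent 𝕜 fun x : (s : Set ι) => b x :=
    b.orthonormal.linearIndependent.comp _ Subtype.val_injective
  rw [Set.image_eq_range, finrank_span_eq_card hli]
  simp

end OrthonormalBasis

namespace LinearMap.IsSymmetric

variable {𝕜 E : Type*} [RCLike 𝕜] [NormedAddCommGroup E] [InnerProductSpace 𝕜 E]
  [FiniteDimensional 𝕜 E] {n : ℕ} (hn : finrank 𝕜 E = n)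

theorem re_inner_apply_self_eq_sum {T : E →ₗ[𝕜] E} (hT : T.IsSymmetric) (v : E) :
    RCLike.re ⟪v, T v⟫_𝕜 = ∑ i, hT.eigenvalues hn i * ‖(hT.eigenvectorBasis hn).repr v i‖ ^ 2 := by
  set b := hT.eigenvectorBasis hn
  rw [← b.repr.inner_map_map, PiLp.inner_apply, map_sum]
  refine Finset.sum_congr rfl fun i _ => ?_
  rw [hT.eigenvectorBasis_apply_self_apply, RCLike.inner_apply, mul_assoc, RCLike.mul_conj,
    ← RCLike.ofReal_pow, ← RCLike.ofReal_mul, RCLike.ofReal_re]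

theorem re_inner_apply_self_le_of_mem_span {T : E →ₗ[𝕜] E} (hT : T.IsSymmetric)
    {s : Set (Fin n)} {c : ℝ} (hs : ∀ i ∈ s, hT.eigenvalues hn i ≤ c) {v : E}
    (hv : v ∈ span 𝕜 (hT.eigenvectorBasis hn '' s)) :
    RCLike.re ⟪v, T v⟫_𝕜 ≤ c * ‖v‖ ^ 2 := by
  rw [hT.re_inner_apply_self_eq_sum hn, ← (hT.eigenvectorBasis hn).repr.norm_map,
    EuclideanSpace.norm_sq_eq, Finset.mul_sum]
  refine Finset.sum_le_sum fun i _ => ?_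
  by_cases hi : i ∈ s
  · exact mul_le_mul_of_nonneg_right (hs i hi) (sq_nonneg _)
  · simp [(hT.eigenvectorBasis hn).repr_eq_zero_of_mem_span_image hv hi]

theorem le_re_inner_apply_self_of_mem_span {T : E →ₗ[𝕜] E} (hT : T.IsSymmetric)
    {s : Set (Fin n)} {c : ℝ} (hs : ∀ i ∈ s, c ≤ hT.eigenvalues hn i) {v : E}
    (hv : v ∈ span 𝕜 (hT.eigenvectorBasis hn '' s)) :
    c * ‖v‖ ^ 2 ≤ RCLike.re ⟪v, T v⟫_𝕜 := by
  rw [hT.re_inner_apply_self_eq_sum hn, ← (hT.eigenvectorBasis hn).repr.norm_map,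
    EuclideanSpace.norm_sq_eq, Finset.mul_sum]
  refine Finset.sum_le_sum fun i _ => ?_
  by_cases hi : i ∈ s
  · exact mul_le_mul_of_nonneg_right (hs i hi) (sq_nonneg _)
  · simp [(hT.eigenvectorBasis hn).repr_eq_zero_of_mem_span_image hv hi]

theorem eigenvalues_add_le {S T : E →ₗ[𝕜] E} (hS : S.IsSymmetric) (hT : T.IsSymmetric)
    {i j : ℕ} (hij : i + j < n) :
    (hS.add hT).eigenvalues hn ⟨i + j, hij⟩ ≤
      hS.eigenvalues hn ⟨i, by omega⟩ + hT.eigenvalues hn ⟨j, by omega⟩ := by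
  set V := span 𝕜 (hS.eigenvectorBasis hn '' ↑(Finset.Ici (⟨i, by omega⟩ : Fin n)))
  set W := span 𝕜 (hT.eigenvectorBasis hn '' ↑(Finset.Ici (⟨j, by omega⟩ : Fin n)))
  set Z := span 𝕜 ((hS.add hT).eigenvectorBasis hn '' ↑(Finset.Iic (⟨i + j, hij⟩ : Fin n)))
  have hdim : 2 * finrank 𝕜 E < finrank 𝕜 V + finrank 𝕜 W + finrank 𝕜 Z := by
    simp only [V, W, Z, OrthonormalBasis.finrank_span_image, Fin.card_Ici, Fin.card_Iic]
    omega
  obtain ⟨v, hv, hv0⟩ := exists_mem_ne_zero_of_ne_bot (inf_inf_ne_bot_of_two_mul_finrank_lt hdim)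
  obtain ⟨⟨hvV, hvW⟩, hvZ⟩ := hv
  have hSv := hS.re_inner_apply_self_le_of_mem_span hn
    (fun k hk => hS.eigenvalues_antitone hn (Finset.mem_Ici.1 hk)) hvV
  have hTv := hT.re_inner_apply_self_le_of_mem_span hn
    (fun k hk => hT.eigenvalues_antitone hn (Finset.mem_Ici.1 hk)) hvW
  have hSTv := (hS.add hT).le_re_inner_apply_self_of_mem_span hn
    (fun k hk => (hS.add hT).eigenvalues_antitone hn (Finset.mem_Iic.1 hk)) hvZ
  rw [LinearMap.add_apply, inner_add_right, map_add] at hSTv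
  have hv2 : 0 < ‖v‖ ^ 2 := by positivity
  exact le_of_mul_le_mul_right (by linarith) hv2

end LinearMap.IsSymmetric

namespace Matrix.IsHermitian

variable {n : Type*} [Fintype n] [DecidableEq n] {A : Matrix n n ℂ}

theorem eigsSorted_eq_ofFn (hA : A.IsHermitian) : eigsSorted A = List.ofFn hA.eigenvalues₀ := by
  rw [eigsSorted, dif_pos hA]
  refine List.Perm.eq_of_pairwise' (List.pairwise_insertionSort _ _)
    (List.pairwise_ofFn.2 fun _ _ h => hA.eigenvalues₀_antitone h.le) ?_
  refine (List.perm_insertionSort _ _).trans (Multiset.coe_eq_coe.1 ?_)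
  rw [← Multiset.map_coe, Finset.coe_toList, ← Fin.univ_val_map]
  unfold eigenvalues
  rw [← Function.comp_def, ← Multiset.map_map, Multiset.map_univ_val_equiv]

theorem eigNth_succ (hA : A.IsHermitian) {m : ℕ} (hm : m < Fintype.card n) :
    eigNth A (m + 1) = hA.eigenvalues₀ ⟨m, hm⟩ := by
  simp [eigNth, hA.eigsSorted_eq_ofFn, hm]

theorem eigenvalues₀_add_le {B : Matrix n n ℂ} (hA : A.IsHermitian) (hB : B.IsHermitian) {i j : ℕ}
    (hij : i + j < Fintype.card n) :
    (hA.add hB).eigenvalues₀ ⟨i + j, hij⟩ ≤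
      hA.eigenvalues₀ ⟨i, by omega⟩ + hB.eigenvalues₀ ⟨j, by omega⟩ := by
  have h := (isSymmetric_toEuclideanLin_iff.mpr hA).eigenvalues_add_le finrank_euclideanSpace
    (isSymmetric_toEuclideanLin_iff.mpr hB) hij
  unfold eigenvalues₀
  -- `toEuclideanLin (A + B)` is only propositionally `toEuclideanLin A + toEuclideanLin B`
  convert h using 3
  exact map_add _ _ _

end Matrix.IsHermitian

theorem weyl_inequality {k : ℕ} (X Y : Matrix (Fin k) (Fin k) ℂ)
    (hX : X.IsHermitian) (hY : Y.IsHermitian)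
    (i j : ℕ) (h1 : 1 ≤ i) (hij : i ≤ j) (hjk : j ≤ k) :
    eigNth (X + Y) j ≤ eigNth X i + eigNth Y (j - i + 1) := by
  obtain ⟨a, rfl⟩ : ∃ a, i = a + 1 := ⟨i - 1, by omega⟩
  obtain ⟨b, rfl⟩ : ∃ b, j = a + b + 1 := ⟨j - a - 1, by omega⟩
  have hab : a + b < Fintype.card (Fin k) := by rw [Fintype.card_fin]; omega
  rw [show a + b + 1 - (a + 1) + 1 = b + 1 by omega, (hX.add hY).eigNth_succ hab,
    hX.eigNth_succ (by omega), hY.eigNth_succ (by omega)]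
  exact hX.eigenvalues₀_add_le hY hab
end

section
/- For m×n complex matrices A, C with m, n ≥ 2, σ₁(Cᵀ⊗A − Aᵀ⊗C)² + σ₂(Cᵀ⊗A − Aᵀ⊗C)² ≤ ‖Cᵀ⊗A − Aᵀ⊗C‖_F², and consequently 2σ₁(Cᵀ⊗A − Aᵀ⊗C)² ≤ ‖A⊗C − C⊗A‖_F². -/
open Matrix Kronecker BigOperators

/-!
Reindexing the rows of `K = Cᵀ ⊗ A - Aᵀ ⊗ C` by `(j, i) ↦ (i, j)` gives a square matrix `S` with
the same Gram matrix `Kᴴ K` and with `Sᵀ = -S`. For skew-symmetric `S`, if `Sᴴ S v = μ v` with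
`μ ≠ 0`, then `w = Sᴴ v̄` satisfies `Sᴴ S w = μ w`, `w ⟂ v` (as `v̄ᵀ Sᴴ v̄ = 0`) and `w ≠ 0`
(as `S w = μ v̄`). So every nonzero eigenvalue of `Sᴴ S` occurs twice, whence
`2 σ₁² ≤ ∑ σᵢ² = trace (Kᴴ K) = ‖K‖_F²`; the entries of `K` are those of `A ⊗ C - C ⊗ A` permuted.
The bound `σ₁² + σ₂² ≤ ‖K‖_F²` holds for any matrix.
-/

namespace Matrix

theorem dotProduct_mulVec_self_eq_zero_of_transpose_eq_neg {R ι : Type*} [CommRing R]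
    [IsAddTorsionFree R] [Fintype ι] {S : Matrix ι ι R} (hS : Sᵀ = -S) (x : ι → R) :
    x ⬝ᵥ (S *ᵥ x) = 0 := by
  refine self_eq_neg.mp ?_
  calc x ⬝ᵥ (S *ᵥ x) = (Sᵀ *ᵥ x) ⬝ᵥ x := by rw [dotProduct_mulVec, mulVec_transpose]
    _ = -(x ⬝ᵥ (S *ᵥ x)) := by rw [hS, neg_mulVec, neg_dotProduct, dotProduct_comm]

variable {𝕜 n : Type*} [RCLike 𝕜] [Fintype n]

theorem IsHermitian.star_dotProduct_eq_zero_of_eigenvalue_ne {H : Matrix n n 𝕜}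
    (hH : H.IsHermitian) {a b : ℝ} {x y : n → 𝕜} (hx : H *ᵥ x = a • x) (hy : H *ᵥ y = b • y)
    (hab : a ≠ b) : star x ⬝ᵥ y = 0 := by
  have key : (a : 𝕜) * (star x ⬝ᵥ y) = b * (star x ⬝ᵥ y) :=
    calc (a : 𝕜) * (star x ⬝ᵥ y) = star (H *ᵥ x) ⬝ᵥ y := by
          rw [hx, star_smul, star_trivial a, smul_dotProduct, RCLike.real_smul_eq_coe_mul]
      _ = star x ⬝ᵥ (H *ᵥ y) := by rw [star_mulVec, hH.eq, dotProduct_mulVec]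
      _ = b * (star x ⬝ᵥ y) := by rw [hy, dotProduct_smul, RCLike.real_smul_eq_coe_mul]
  exact (mul_eq_mul_right_iff.mp key).resolve_left (by exact_mod_cast hab)

variable [DecidableEq n]

theorem IsHermitian.exists_ne_eigenvalues_eq {H : Matrix n n 𝕜} (hH : H.IsHermitian) {μ : ℝ}
    {w : n → 𝕜} (hw0 : w ≠ 0) (hw : H *ᵥ w = μ • w) {i : n}
    (hwi : star ⇑(hH.eigenvectorBasis i) ⬝ᵥ w = 0) :
    ∃ j ≠ i, hH.eigenvalues j = μ := by
  by_contra! hne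
  have hcoeff (j : n) : star ⇑(hH.eigenvectorBasis j) ⬝ᵥ w = 0 := by
    obtain rfl | hj := eq_or_ne j i
    · exact hwi
    · exact hH.star_dotProduct_eq_zero_of_eigenvalue_ne (hH.mulVec_eigenvectorBasis j) hw
        (hne j hj)
  refine hw0 (WithLp.toLp_injective 2 (hH.eigenvectorBasis.repr.injective ?_))
  ext j
  rw [OrthonormalBasis.repr_apply_apply, EuclideanSpace.inner_eq_star_dotProduct,
    dotProduct_comm]
  simpa using hcoeff j

theorem exists_ne_eigenvalues_conjTranspose_mul_self_eq {S : Matrix n n 𝕜} (hS : Sᵀ = -S)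
    {i : n} (hi : (isHermitian_conjTranspose_mul_self S).eigenvalues i ≠ 0) :
    ∃ j ≠ i, (isHermitian_conjTranspose_mul_self S).eigenvalues j =
      (isHermitian_conjTranspose_mul_self S).eigenvalues i := by
  set hH := isHermitian_conjTranspose_mul_self S
  set μ := hH.eigenvalues i
  set v : n → 𝕜 := ⇑(hH.eigenvectorBasis i)
  have hv0 : v ≠ 0 := (WithLp.ofLp_eq_zero 2).ne.2 (hH.eigenvectorBasis.orthonormal.ne_zero i)
  have hSH : Sᴴᵀ = -Sᴴ := by
    rw [← conjTranspose_transpose_eq_transpose_conjTranspose, hS, conjTranspose_neg]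
  have hu : (S * Sᴴ) *ᵥ star v = μ • star v :=
    calc (S * Sᴴ) *ᵥ star v = (Sᴴ * S)ᵀ *ᵥ star v := by
          rw [transpose_mul, hS, hSH, neg_mul_neg]
      _ = star ((Sᴴ * S) *ᵥ v) := by rw [mulVec_transpose, star_mulVec, hH.eq]
      _ = μ • star v := by rw [hH.mulVec_eigenvectorBasis i, star_smul, star_trivial]
  refine hH.exists_ne_eigenvalues_eq (w := Sᴴ *ᵥ star v) ?_ ?_
    (dotProduct_mulVec_self_eq_zero_of_transpose_eq_neg hSH _)
  · intro hw
    rw [← mulVec_mulVec, hw, mulVec_zero, eq_comm, smul_eq_zero, star_eq_zero] at hu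
    exact hu.elim hi hv0
  · rw [mulVec_mulVec, Matrix.mul_assoc, ← mulVec_mulVec, hu, mulVec_smul]

end Matrix

open scoped ComplexOrder

theorem List.getD_zero_add_getD_one_le_sum {l : List ℝ} (hl : ∀ x ∈ l, 0 ≤ x) :
    l.getD 0 0 + l.getD 1 0 ≤ l.sum := by
  match l with
  | [] => simp
  | [a] => simp
  | a :: b :: t =>
    have ht : 0 ≤ t.sum := List.sum_nonneg fun x hx => hl x (by simp [hx])
    simp only [List.getD_cons_zero, List.getD_cons_succ, List.sum_cons]
    linarith

section SortedEigenvalues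

variable {k : Type*} [Fintype k] [DecidableEq k] {H : Matrix k k ℂ}

theorem eigsSorted_perm (hH : H.IsHermitian) :
    (eigsSorted H).Perm (Finset.univ.toList.map hH.eigenvalues) := by
  rw [eigsSorted, dif_pos hH]
  exact List.perm_insertionSort _ _

theorem eigNth_eq_zero_or_exists_eigenvalues_eq (hH : H.IsHermitian) (r : ℕ) :
    eigNth H r = 0 ∨ ∃ i, hH.eigenvalues i = eigNth H r := by
  rw [eigNth, List.getD_eq_getElem?_getD]
  cases h : (eigsSorted H)[r - 1]? with
  | none => exact Or.inl rfl
  | some _ =>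
    obtain ⟨i, -, hi⟩ := List.mem_map.mp ((eigsSorted_perm hH).subset (List.mem_of_getElem? h))
    exact Or.inr ⟨i, hi⟩

theorem eigNth_nonneg (hH : H.PosSemidef) (r : ℕ) : 0 ≤ eigNth H r := by
  obtain h | ⟨i, hi⟩ := eigNth_eq_zero_or_exists_eigenvalues_eq hH.isHermitian r
  · exact h.ge
  · exact hi ▸ hH.eigenvalues_nonneg i

theorem eigNth_one_add_eigNth_two_le (hH : H.PosSemidef) :
    eigNth H 1 + eigNth H 2 ≤ ∑ i, hH.isHermitian.eigenvalues i := by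
  rw [← Finset.sum_map_toList, ← (eigsSorted_perm hH.isHermitian).sum_eq]
  refine List.getD_zero_add_getD_one_le_sum fun x hx => ?_
  obtain ⟨i, -, rfl⟩ := List.mem_map.mp ((eigsSorted_perm hH.isHermitian).subset hx)
  exact hH.eigenvalues_nonneg i

theorem two_mul_eigNth_le_sum_eigenvalues (hH : H.PosSemidef)
    (hpair : ∀ i, hH.isHermitian.eigenvalues i ≠ 0 →
      ∃ j ≠ i, hH.isHermitian.eigenvalues j = hH.isHermitian.eigenvalues i) (r : ℕ) :
    2 * eigNth H r ≤ ∑ i, hH.isHermitian.eigenvalues i := by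
  have hsum_nonneg : 0 ≤ ∑ i, hH.isHermitian.eigenvalues i :=
    Finset.sum_nonneg fun i _ => hH.eigenvalues_nonneg i
  obtain h | ⟨i, hi⟩ := eigNth_eq_zero_or_exists_eigenvalues_eq hH.isHermitian r
  · rwa [h, mul_zero]
  rw [← hi]
  obtain h0 | hne := eq_or_ne (hH.isHermitian.eigenvalues i) 0
  · rwa [h0, mul_zero]
  obtain ⟨j, hji, hj⟩ := hpair i hne
  calc 2 * hH.isHermitian.eigenvalues i
      = hH.isHermitian.eigenvalues i + hH.isHermitian.eigenvalues j := by rw [hj, two_mul]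
    _ ≤ ∑ i, hH.isHermitian.eigenvalues i :=
      Finset.add_le_sum (fun l _ => hH.eigenvalues_nonneg l) (Finset.mem_univ _)
        (Finset.mem_univ _) hji.symm

end SortedEigenvalues

section SingularValues

variable {m m' n : Type*} [Fintype m] [Fintype m'] [Fintype n]

theorem frobSq_submatrix_equiv_id (K : Matrix m n ℂ) (e : m' ≃ m) :
    frobSq (K.submatrix e id) = frobSq K :=
  Fintype.sum_equiv e _ _ fun _ => rfl

variable [DecidableEq n]

theorem sq_sv (K : Matrix m n ℂ) (r : ℕ) : sv K r ^ 2 = eigNth (Kᴴ * K) r :=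
  Real.sq_sqrt (eigNth_nonneg (posSemidef_conjTranspose_mul_self K) r)

theorem sv_submatrix_equiv_id (K : Matrix m n ℂ) (e : m' ≃ m) (r : ℕ) :
    sv (K.submatrix e id) r = sv K r := by
  rw [sv, conjTranspose_submatrix, submatrix_mul_equiv, submatrix_id_id, sv]

theorem sum_eigenvalues_conjTranspose_mul_self (K : Matrix m n ℂ) :
    ∑ i, (isHermitian_conjTranspose_mul_self K).eigenvalues i = frobSq K := by
  have htrace : (Kᴴ * K).trace = frobSq K := by
    simp only [frobSq, trace, diag_apply, mul_apply, conjTranspose_apply]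
    rw [Finset.sum_comm]
    push_cast
    refine Finset.sum_congr rfl fun j _ => Finset.sum_congr rfl fun i _ => ?_
    rw [Complex.star_def, Complex.conj_mul']
  rw [(isHermitian_conjTranspose_mul_self K).trace_eq_sum_eigenvalues] at htrace
  apply Complex.ofReal_injective
  rw [← htrace]
  simp

theorem sv_one_sq_add_sv_two_sq_le_frobSq (K : Matrix m n ℂ) :
    sv K 1 ^ 2 + sv K 2 ^ 2 ≤ frobSq K := by
  rw [sq_sv, sq_sv, ← sum_eigenvalues_conjTranspose_mul_self]
  exact eigNth_one_add_eigNth_two_le (posSemidef_conjTranspose_mul_self K)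

theorem two_mul_sv_sq_le_frobSq_of_transpose_eq_neg {S : Matrix n n ℂ} (hS : Sᵀ = -S)
    (r : ℕ) : 2 * sv S r ^ 2 ≤ frobSq S := by
  rw [sq_sv, ← sum_eigenvalues_conjTranspose_mul_self]
  exact two_mul_eigNth_le_sum_eigenvalues (posSemidef_conjTranspose_mul_self S)
    (fun _ => exists_ne_eigenvalues_conjTranspose_mul_self_eq hS) r

end SingularValues

section Kronecker

variable {R m n : Type*} [CommRing R]

theorem transpose_submatrix_prodComm_transpose_kronecker_sub (A C : Matrix m n R) :
    ((Cᵀ ⊗ₖ A - Aᵀ ⊗ₖ C).submatrix (Equiv.prodComm m n) id)ᵀ =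
      -(Cᵀ ⊗ₖ A - Aᵀ ⊗ₖ C).submatrix (Equiv.prodComm m n) id := by
  ext ⟨i, j⟩ ⟨k, l⟩
  simp only [transpose_apply, submatrix_apply, Matrix.neg_apply, Matrix.sub_apply,
    kroneckerMap_apply, Equiv.prodComm_apply, Prod.swap_prod_mk, id]
  ring

theorem frobSq_transpose_kronecker_sub [Fintype m] [Fintype n] (A C : Matrix m n ℂ) :
    frobSq (Cᵀ ⊗ₖ A - Aᵀ ⊗ₖ C) = frobSq (A ⊗ₖ C - C ⊗ₖ A) := by
  simp only [frobSq, ← Fintype.sum_prod_type']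
  refine Fintype.sum_equiv
    { toFun := fun z => ((z.1.2, z.2.1), (z.2.2, z.1.1))
      invFun := fun z => ((z.2.2, z.1.1), (z.1.2, z.2.1))
      left_inv := fun _ => rfl
      right_inv := fun _ => rfl } _ _ fun ⟨⟨j, i⟩, ⟨k, l⟩⟩ => ?_
  simp only [Equiv.coe_fn_mk, Matrix.sub_apply, kroneckerMap_apply, transpose_apply]
  ring_nf

end Kronecker

theorem K_sv_bound_general {m n : ℕ} (A C : Matrix (Fin m) (Fin n) ℂ) :
    sv (Cᵀ ⊗ₖ A - Aᵀ ⊗ₖ C) 1 ^ 2 + sv (Cᵀ ⊗ₖ A - Aᵀ ⊗ₖ C) 2 ^ 2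
        ≤ frobSq (Cᵀ ⊗ₖ A - Aᵀ ⊗ₖ C) ∧
    2 * sv (Cᵀ ⊗ₖ A - Aᵀ ⊗ₖ C) 1 ^ 2 ≤ frobSq (A ⊗ₖ C - C ⊗ₖ A) := by
  refine ⟨sv_one_sq_add_sv_two_sq_le_frobSq _, ?_⟩
  rw [← frobSq_transpose_kronecker_sub, ← sv_submatrix_equiv_id _ (Equiv.prodComm _ _),
    ← frobSq_submatrix_equiv_id _ (Equiv.prodComm _ _)]
  exact two_mul_sv_sq_le_frobSq_of_transpose_eq_neg
    (transpose_submatrix_prodComm_transpose_kronecker_sub A C) 1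

theorem K_sv_bound {m n : ℕ} (hm : 2 ≤ m) (hn : 2 ≤ n) (A C : Matrix (Fin m) (Fin n) ℂ) :
    sv (Cᵀ ⊗ₖ A - Aᵀ ⊗ₖ C) 1 ^ 2 + sv (Cᵀ ⊗ₖ A - Aᵀ ⊗ₖ C) 2 ^ 2
        ≤ frobSq (Cᵀ ⊗ₖ A - Aᵀ ⊗ₖ C) ∧
    2 * sv (Cᵀ ⊗ₖ A - Aᵀ ⊗ₖ C) 1 ^ 2 ≤ frobSq (A ⊗ₖ C - C ⊗ₖ A) :=
  K_sv_bound_general A C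
end
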